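/- Let K be a field and M a finite J-trivial monoid with set of idempotents E(M). Let (g_e)_{e ∈ E(M)} be the unique family of elements of the K-span of E(M) inside MonoidAlgebra K M satisfying e = Σ_{e' ∈ E(M), e' ≤_J e} g_{e'} for all e ∈ E(M). Then there exists a family (f_e)_{e ∈ E(M)} of elements of MonoidAlgebra K M such that: (i) Σ_{e ∈ E(M)} f_e = 1 and f_e · f_{e'} = f_e if e = e' and 0 otherwise (a decomposition of the identity into orthogonal idempotents); (ii) f_e − g_e lies in the Jacobson radical of MonoidAlgebra K M for every e ∈ E(M); (iii) f_e is uni-triangular with respect to ≤_J: f_e − e lies in the K-span of {x ∈ M : x <_J e}. -/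

import Mathlib

def leJ {M : Type*} [Monoid M] (x y : M) : Prop := ∃ u v : M, x = u * y * v

def JTrivial (M : Type*) [Monoid M] : Prop :=
  ∀ x y : M, {z : M | ∃ u v : M, z = u * x * v} = {z : M | ∃ u v : M, z = u * y * v} → x = y

open Classical

/-!
For an idempotent `e` of a finite `J`-trivial monoid `M`, `m ↦ [m * e = e]` is multiplicative;
let `χ_e : K[M] → K` be its linear extension. Every `u` killed by all `χ_e` is nilpotent: if `u`
is supported on a `≤_J`-lower set with maximal element `z`, then either `z` is idempotent and the
coefficient of `z` in `u` is `χ_z u = 0`, or `z * z <_J z`; either way `u ^ 2` is supported below.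
So the common kernel of the `χ_e` lies in the Jacobson radical, and `χ_{e'} g_e = δ_{e' e}` by
triangularity of the relation defining `g`.

The `f_e` are built one idempotent at a time along a linear extension of `≤_J`. With `s` the sum
of those already built, `t = (1 - s) e (1 - s)` is orthogonal to them, `χ_{e'} t = δ_{e' e}`, and
`t ≡ e` modulo the span of `{x <_J e}`, a two-sided ideal. Hence `t - t ^ 2` is nilpotent, and
the standard lift of `t` to an idempotent keeps all three properties.
-/

open Finset
open Submodule (span)
open MonoidAlgebra (of)
open scoped MonoidAlgebra

local notation "E(" M ")" => {e : M // IsIdempotentElem e}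

section

variable {M : Type*} [Monoid M]

theorem leJ_refl (x : M) : leJ x x := ⟨1, 1, by rw [one_mul, mul_one]⟩

theorem leJ_trans {x y z : M} (hxy : leJ x y) (hyz : leJ y z) : leJ x z := by
  obtain ⟨u, v, rfl⟩ := hxy
  obtain ⟨a, b, rfl⟩ := hyz
  exact ⟨u * a, b * v, by simp only [mul_assoc]⟩

theorem leJ_mul_left (x y : M) : leJ (x * y) y := ⟨x, 1, by rw [mul_one]⟩

theorem leJ_mul_right (x y : M) : leJ (x * y) x := ⟨1, y, by rw [one_mul]⟩

theorem leJ_of_mul_left_eq_self {x e : M} (h : x * e = e) : leJ e x :=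
  ⟨1, e, by rw [one_mul, h]⟩

theorem leJ_of_mul_right_eq_self {x e : M} (h : e * x = e) : leJ e x :=
  ⟨e, 1, by rw [mul_one, h]⟩

theorem JTrivial.leJ_antisymm (hJ : JTrivial M) {x y : M} (hxy : leJ x y) (hyx : leJ y x) :
    x = y :=
  hJ x y <| Set.ext fun _ => ⟨fun h => leJ_trans h hxy, fun h => leJ_trans h hyx⟩

theorem JTrivial.mul_mul_eq_self_iff (hJ : JTrivial M) {x y e : M} :
    x * y * e = e ↔ x * e = e ∧ y * e = e := by
  refine ⟨fun h => ?_, fun ⟨hx, hy⟩ => by rw [mul_assoc, hy, hx]⟩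
  have hy : y * e = e :=
    hJ.leJ_antisymm (leJ_mul_left y e) ⟨x, 1, by rw [mul_one, ← mul_assoc, h]⟩
  exact ⟨by simpa only [mul_assoc, hy] using h, hy⟩

theorem JTrivial.mul_eq_self_iff_leJ (hJ : JTrivial M) {x e : M} (he : IsIdempotentElem e) :
    x * e = e ↔ leJ e x := by
  refine ⟨leJ_of_mul_left_eq_self, fun ⟨u, v, h⟩ => ?_⟩
  have key : ∀ a b : M, e = a * b → b * e = e := fun a b hab =>
    hJ.leJ_antisymm (leJ_mul_left b e) ⟨a, 1, by rw [mul_one, ← mul_assoc, ← hab, he.eq]⟩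
  have hve : v * e = e := key (u * x) v h
  calc x * e = x * v * e := by rw [mul_assoc, hve]
    _ = e := key u (x * v) (by rw [h, mul_assoc])

def IsLowerJ {α : Type*} (v : α → M) (S : Set α) : Prop :=
  ∀ ⦃x y⦄, leJ (v x) (v y) → y ∈ S → x ∈ S

theorem IsLowerJ.of_insert {α : Type*} {v : α → M} {a : α} {S : Set α}
    (hS : IsLowerJ v (insert a S)) (htop : ∀ x ∈ S, ¬ leJ (v a) (v x)) : IsLowerJ v S :=
  fun _ y hxy hy => (hS hxy (Or.inr hy)).resolve_left fun hxa => htop y hy (hxa ▸ hxy)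

theorem JTrivial.isLowerJ_strictLower (hJ : JTrivial M) (a : M) :
    IsLowerJ id {x | leJ x a ∧ x ≠ a} := by
  rintro x y hxy ⟨hya, hne⟩
  exact ⟨leJ_trans hxy hya, by rintro rfl; exact hne (hJ.leJ_antisymm hya hxy)⟩

section Height

variable [Fintype M]

noncomputable def jHeight (x : M) : ℕ := #{y | leJ y x}

theorem JTrivial.jHeight_lt (hJ : JTrivial M) {x y : M} (hxy : leJ x y) (hne : x ≠ y) :
    jHeight x < jHeight y := by
  refine card_lt_card ⟨fun z hz => ?_, fun h => hne ?_⟩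
  · simp only [mem_filter, mem_univ, true_and] at hz ⊢
    exact leJ_trans hz hxy
  · have hyx : leJ y x := by simpa using h (by simpa using leJ_refl y)
    exact hJ.leJ_antisymm hxy hyx

theorem JTrivial.not_leJ_of_jHeight_le (hJ : JTrivial M) {x y : M} (hne : x ≠ y)
    (h : jHeight y ≤ jHeight x) : ¬ leJ x y :=
  fun hxy => (hJ.jHeight_lt hxy hne).not_ge h

end Height

section Character

variable (K : Type*) [CommRing K]

noncomputable def JTrivial.character (hJ : JTrivial M) (e : M) : K[M] →ₐ[K] K :=
  MonoidAlgebra.lift K K M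
    { toFun := fun m => if m * e = e then 1 else 0
      map_one' := by simp
      map_mul' := fun x y => by
        by_cases hx : x * e = e <;> by_cases hy : y * e = e <;>
          simp [hJ.mul_mul_eq_self_iff, hx, hy] }

variable {K}

theorem JTrivial.character_of (hJ : JTrivial M) (e m : M) :
    hJ.character K e (of K M m) = if m * e = e then 1 else 0 :=
  MonoidAlgebra.lift_of _ _

theorem JTrivial.character_of_of_isIdempotentElem (hJ : JTrivial M) {e : M}
    (he : IsIdempotentElem e) (m : M) :
    hJ.character K e (of K M m) = if leJ e m then 1 else 0 := by
  rw [hJ.character_of]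
  exact if_congr (hJ.mul_eq_self_iff_leJ he) rfl rfl

theorem JTrivial.character_eq_zero_of_mem_span (hJ : JTrivial M) {D : Set M} {e : M}
    (hD : ∀ x ∈ D, ¬ leJ e x) {u : K[M]} (hu : u ∈ span K (of K M '' D)) :
    hJ.character K e u = 0 := by
  have : span K (of K M '' D) ≤ LinearMap.ker (hJ.character K e).toLinearMap := by
    rw [Submodule.span_le]
    rintro _ ⟨x, hx, rfl⟩
    rw [SetLike.mem_coe, LinearMap.mem_ker, AlgHom.toLinearMap_apply, hJ.character_of,
      if_neg fun h => hD x hx (leJ_of_mul_left_eq_self h)]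
  exact this hu

end Character

section LowerSpan

variable {K : Type*} [CommRing K]

theorem IsLowerJ.mul_mul_mem_span {D : Set M} (hD : IsLowerJ id D) {a : K[M]}
    (ha : a ∈ span K (of K M '' D)) (b c : K[M]) : b * a * c ∈ span K (of K M '' D) := by
  have huniv : ∀ w : K[M], w ∈ span K (of K M '' Set.univ) := fun w =>
    Submodule.span_mono (Set.image_mono (Set.subset_univ _))
      (MonoidAlgebra.mem_span_support_coeff w)
  have h := Submodule.mul_mem_mul (Submodule.mul_mem_mul (huniv b) ha) (huniv c)
  rw [Submodule.span_mul_span, Submodule.span_mul_span] at h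
  refine Submodule.span_mono ?_ h
  rintro _ ⟨_, ⟨_, ⟨x, -, rfl⟩, _, ⟨y, hy, rfl⟩, rfl⟩, _, ⟨z, -, rfl⟩, rfl⟩
  exact ⟨x * y * z, hD (x := x * y * z) ⟨x, z, rfl⟩ hy, by simp only [map_mul]⟩

variable (K) in
noncomputable def IsLowerJ.spanIdeal {D : Set M} (hD : IsLowerJ id D) : TwoSidedIdeal K[M] :=
  .mk' (span K (of K M '' D)) (zero_mem _) add_mem neg_mem
    (fun hy => by simpa using hD.mul_mul_mem_span hy _ 1)
    (fun hx => by simpa using hD.mul_mul_mem_span hx 1 _)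

theorem IsLowerJ.mem_spanIdeal {D : Set M} (hD : IsLowerJ id D) {w : K[M]} :
    w ∈ hD.spanIdeal K ↔ w ∈ span K (of K M '' D) :=
  TwoSidedIdeal.mem_mk' ..

theorem mul_of_mem_span_not_leJ {a : M} {w : K[M]}
    (hw : w ∈ span K (of K M '' {x | ¬ leJ a x})) :
    w * of K M a ∈ span K (of K M '' {x | leJ x a ∧ x ≠ a}) ∧
      of K M a * w ∈ span K (of K M '' {x | leJ x a ∧ x ≠ a}) := by
  induction hw using Submodule.span_induction with
  | mem _ h =>
    obtain ⟨x, hx, rfl⟩ := h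
    rw [← map_mul, ← map_mul]
    exact ⟨Submodule.subset_span
        ⟨_, ⟨leJ_mul_left x a, fun h => hx (leJ_of_mul_left_eq_self h)⟩, rfl⟩,
      Submodule.subset_span
        ⟨_, ⟨leJ_mul_right a x, fun h => hx (leJ_of_mul_right_eq_self h)⟩, rfl⟩⟩
  | zero => simp
  | add _ _ _ _ h₁ h₂ =>
    rw [add_mul, mul_add]
    exact ⟨add_mem h₁.1 h₂.1, add_mem h₁.2 h₂.2⟩
  | smul c _ _ h =>
    rw [smul_mul_assoc, mul_smul_comm]
    exact ⟨Submodule.smul_mem _ c h.1, Submodule.smul_mem _ c h.2⟩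

end LowerSpan

section Radical

variable {K : Type*} [CommRing K]

theorem JTrivial.sq_mem_span_of_mem_span_insert (hJ : JTrivial M) {D : Set M} {z : M}
    (hzD : IsLowerJ id (insert z D)) (hD : IsLowerJ id D) (htop : ∀ x ∈ D, ¬ leJ z x)
    {u : K[M]} (hu : u ∈ span K (of K M '' insert z D))
    (hχ : IsIdempotentElem z → hJ.character K z u = 0) : u ^ 2 ∈ span K (of K M '' D) := by
  rw [Set.image_insert_eq, Submodule.mem_span_insert] at hu
  obtain ⟨c, u', hu', rfl⟩ := hu
  simp_rw [← hD.mem_spanIdeal (K := K)] at hu' ⊢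
  have hzz : c • of K M z * c • of K M z ∈ hD.spanIdeal K := by
    by_cases hz : IsIdempotentElem z
    · -- `u'` is supported away from `z`, so `χ_z u` is the coefficient of `z` in `u`
      have hc : c = 0 := by
        have h := hχ hz
        rwa [map_add, map_smul, hJ.character_of, if_pos hz.eq,
          hJ.character_eq_zero_of_mem_span htop ((hD.mem_spanIdeal).mp hu'), smul_eq_mul,
          mul_one, add_zero] at h
      simp [hc]
    · have hzzD : z * z ∈ D := (hzD (leJ_mul_right z z) (Set.mem_insert z D)).resolve_left hz
      rw [smul_mul_smul_comm, ← map_mul, hD.mem_spanIdeal]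
      exact Submodule.smul_mem _ _ (Submodule.subset_span ⟨_, hzzD, rfl⟩)
  rw [sq, add_mul, mul_add]
  exact add_mem (add_mem hzz (TwoSidedIdeal.mul_mem_left _ _ _ hu'))
    (TwoSidedIdeal.mul_mem_right _ _ _ hu')

variable [Fintype M]

theorem JTrivial.isNilpotent_of_forall_character_eq_zero (hJ : JTrivial M) {u : K[M]}
    (hu : ∀ e, IsIdempotentElem e → hJ.character K e u = 0) : IsNilpotent u := by
  suffices ∀ D : Finset M, IsLowerJ id (D : Set M) → ∀ u ∈ span K (of K M '' D),
      (∀ e, IsIdempotentElem e → hJ.character K e u = 0) → IsNilpotent u from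
    this univ (fun _ _ _ _ => mem_univ _) u (by
      simpa using Submodule.span_mono (Set.image_mono (Set.subset_univ _))
        (MonoidAlgebra.mem_span_support_coeff u)) hu
  intro D
  induction D using Finset.induction_on_max_value (fun x : M => jHeight x) with
  | empty =>
    intro _ u hu _
    simp only [coe_empty, Set.image_empty, Submodule.span_empty, Submodule.mem_bot] at hu
    exact hu ▸ IsNilpotent.zero
  | insert z D hz hmax ih =>
    intro hzD u hu hχ
    have htop : ∀ x ∈ D, ¬ leJ z x := fun x hx =>
      hJ.not_leJ_of_jHeight_le (ne_of_mem_of_not_mem hx hz).symm (hmax x hx)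
    rw [coe_insert] at hzD hu
    have hD : IsLowerJ id (D : Set M) := hzD.of_insert htop
    refine IsNilpotent.of_pow (m := 2) (ih hD _ ?_ fun e he => ?_)
    · exact hJ.sq_mem_span_of_mem_span_insert hzD hD htop hu (hχ z)
    · rw [map_pow, hχ e he, zero_pow two_ne_zero]

theorem JTrivial.mem_jacobson_of_forall_character_eq_zero (hJ : JTrivial M) {w : K[M]}
    (hw : ∀ e, IsIdempotentElem e → hJ.character K e w = 0) :
    w ∈ Ideal.jacobson (⊥ : Ideal K[M]) := by
  refine Ideal.mem_jacobson_iff.mpr fun y => ?_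
  have hyw : IsNilpotent (y * w) :=
    hJ.isNilpotent_of_forall_character_eq_zero fun e he => by rw [map_mul, hw e he, mul_zero]
  obtain ⟨z, hz⟩ := hyw.isUnit_add_one.exists_left_inv
  exact ⟨z, by rw [Ideal.mem_bot, mul_assoc, ← mul_add_one, hz, sub_self]⟩

theorem JTrivial.character_eq_of_eq_sum (hJ : JTrivial M) (g : E(M) → K[M])
    (hg : ∀ e : E(M), (of K M (e : M) : K[M])
      = ∑ e' ∈ univ.filter (fun e' : E(M) => leJ (e' : M) (e : M)), g e')
    (e e' : E(M)) : hJ.character K e' (g e) = if e' = e then 1 else 0 := by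
  induction e using (measure fun e : E(M) => jHeight (e : M)).wf.induction with | h e ih
  have hlow : ∀ e'' ∈ (univ.filter fun x : E(M) => leJ (x : M) e).erase e,
      hJ.character K e' (g e'') = if e' = e'' then 1 else 0 := by
    intro e'' he''
    obtain ⟨hne, hle⟩ := mem_erase.mp he''
    exact ih e'' (hJ.jHeight_lt (mem_filter.mp hle).2 (Subtype.val_injective.ne hne))
  have key := congrArg (hJ.character K e') (hg e)
  rw [map_sum, ← add_sum_erase _ _ (mem_filter.mpr ⟨mem_univ e, leJ_refl (e : M)⟩),
    sum_congr rfl hlow, sum_ite_eq, hJ.character_of_of_isIdempotentElem e'.2] at key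
  by_cases h : e' = e
  · subst h
    simpa [leJ_refl] using key.symm
  · simp only [mem_erase, mem_filter, mem_univ, true_and, h, ne_eq, not_false_eq_true]
      at key ⊢
    split_ifs at key <;> simpa using key.symm

end Radical

section IdempotentLifting

variable {R : Type*} [Ring R]

theorem TwoSidedIdeal.mem_iff_mk'_eq_zero (I : TwoSidedIdeal R) {x : R} :
    x ∈ I ↔ I.ringCon.mk' x = 0 := by
  conv_lhs => rw [← TwoSidedIdeal.ker_ringCon_mk' I]
  exact TwoSidedIdeal.mem_ker _

theorem TwoSidedIdeal.sub_sq_mem_of_sub_mem (I : TwoSidedIdeal R) {t a : R}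
    (ha : IsIdempotentElem a) (h : t - a ∈ I) : t - t ^ 2 ∈ I := by
  rw [mem_iff_mk'_eq_zero, map_sub, sub_eq_zero] at h
  rw [mem_iff_mk'_eq_zero, map_sub, map_pow, h, sq, ← map_mul, ha.eq, sub_self]

/-- The lift is `1 - (1 - t ^ n) ^ n` where `(t - t ^ 2) ^ n = 0`; it is a two-sided multiple
of `t ^ n`. -/
theorem exists_isIdempotentElem_of_isNilpotent_sub_sq {t : R} (ht : IsNilpotent (t - t ^ 2)) :
    ∃ f : R, IsIdempotentElem f ∧ (∀ x, x * t = 0 → x * f = 0) ∧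
      (∀ x, t * x = 0 → f * x = 0) ∧
      ∀ I : TwoSidedIdeal R, t - t ^ 2 ∈ I → f - t ∈ I := by
  obtain ⟨n, hn⟩ := ht
  have hn' : (t - t ^ 2) ^ (n + 1) = 0 := by rw [pow_succ, hn, zero_mul]
  set N := n + 1
  set G := ∑ i ∈ range N, (1 - t ^ N) ^ i
  have hleft : 1 - (1 - t ^ N) ^ N = t ^ N * G := by
    rw [← mul_neg_geom_sum, sub_sub_cancel]
  have hright : 1 - (1 - t ^ N) ^ N = G * t ^ N := by
    rw [← geom_sum_mul_neg, sub_sub_cancel]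
  refine ⟨1 - (1 - t ^ N) ^ N, isIdempotentElem_one_sub_one_sub_pow_pow t N hn',
    fun x hx => ?_, fun x hx => ?_, fun I hI => ?_⟩
  · rw [hleft, ← mul_assoc, pow_succ', ← mul_assoc, hx, zero_mul, zero_mul]
  · rw [hright, mul_assoc, pow_succ, mul_assoc, hx, mul_zero, mul_zero]
  · have hidem : IsIdempotentElem (I.ringCon.mk' t) := by
      rw [I.mem_iff_mk'_eq_zero, map_sub, sub_eq_zero, map_pow, sq] at hI
      exact hI.symm
    rw [I.mem_iff_mk'_eq_zero, map_sub, map_sub, map_one, map_pow, map_sub, map_one, map_pow,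
      hidem.pow_succ_eq, hidem.one_sub.pow_succ_eq, sub_sub_cancel, sub_self]

end IdempotentLifting

section Construction

variable {K : Type*} [CommRing K]

variable (K) in
/-- Setting `f e = 0` off `S` lets `∑ e, f e` stand for the sum over `S`. -/
structure IsLiftingOn (hJ : JTrivial M) (S : Finset E(M)) (f : E(M) → K[M]) : Prop where
  orthogonalIdempotents : OrthogonalIdempotents f
  eq_zero : ∀ e ∉ S, f e = 0
  sub_mem_span : ∀ e ∈ S, f e - of K M (e : M) ∈ span K (of K M '' {x | leJ x e ∧ x ≠ e})
  character_eq : ∀ e ∈ S, ∀ e' : E(M), hJ.character K e' (f e) = if e' = e then 1 else 0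

noncomputable def compression [Fintype M] (f : E(M) → K[M]) (a : M) : K[M] :=
  (1 - ∑ e, f e) * of K M a * (1 - ∑ e, f e)

theorem OrthogonalIdempotents.mul_compression [Fintype M] {f : E(M) → K[M]}
    (hf : OrthogonalIdempotents f) (e : E(M)) (a : M) : f e * compression f a = 0 := by
  have h : f e * (1 - ∑ e, f e) = 0 := by
    rw [mul_sub, mul_one, hf.mul_sum_of_mem (mem_univ e), sub_self]
  rw [compression, ← mul_assoc, ← mul_assoc, h, zero_mul, zero_mul]

theorem OrthogonalIdempotents.compression_mul [Fintype M] {f : E(M) → K[M]}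
    (hf : OrthogonalIdempotents f) (e : E(M)) (a : M) : compression f a * f e = 0 := by
  have h : (1 - ∑ e, f e) * f e = 0 := by simp [sub_mul, sum_mul, hf.mul_eq]
  rw [compression, mul_assoc, h, mul_zero]

namespace IsLiftingOn

variable {hJ : JTrivial M} {S : Finset E(M)} {f : E(M) → K[M]}

theorem character_sum [Fintype M] (hf : IsLiftingOn K hJ S f) (e' : E(M)) :
    hJ.character K e' (∑ e, f e) = if e' ∈ S then 1 else 0 := by
  rw [map_sum, ← sum_subset (subset_univ S) fun e _ he => by rw [hf.eq_zero e he, map_zero],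
    sum_congr rfl fun e he => hf.character_eq e he e', sum_ite_eq]

theorem mem_span_leJ (hf : IsLiftingOn K hJ S f) {e : E(M)} (he : e ∈ S) :
    f e ∈ span K (of K M '' {x | leJ x e}) := by
  have h := add_mem (Submodule.span_mono (Set.image_mono fun x (hx : _ ∧ _) => hx.1)
    (hf.sub_mem_span e he)) (Submodule.subset_span ⟨(e : M), leJ_refl (e : M), rfl⟩)
  rwa [sub_add_cancel] at h

theorem character_compression [Fintype M] (hf : IsLiftingOn K hJ S f) {a : E(M)} (ha : a ∉ S)
    (hbelow : ∀ e : E(M), leJ (e : M) a → e ≠ a → e ∈ S) (e' : E(M)) :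
    hJ.character K e' (compression f a) = if e' = a then 1 else 0 := by
  simp only [compression, map_mul, map_sub, map_one, hf.character_sum,
    hJ.character_of_of_isIdempotentElem e'.2]
  by_cases h : e' = a
  · simp [h, ha, leJ_refl]
  · by_cases hle : leJ (e' : M) a
    · simp [h, hbelow e' hle h, hle]
    · simp [h, hle]

theorem compression_sub_mem_span [Fintype M] (hf : IsLiftingOn K hJ S f) {a : E(M)}
    (htop : ∀ e ∈ S, ¬ leJ (a : M) e) :
    compression f a - of K M (a : M) ∈ span K (of K M '' {x | leJ x a ∧ x ≠ a}) := by
  set s := ∑ e, f e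
  set A := of K M (a : M)
  have hs : s ∈ span K (of K M '' {x | ¬ leJ (a : M) x}) := sum_mem fun e _ => by
    by_cases he : e ∈ S
    · exact Submodule.span_mono (Set.image_mono fun x hx hax => htop e he (leJ_trans hax hx))
        (hf.mem_span_leJ he)
    · rw [hf.eq_zero e he]
      exact zero_mem _
  set I := (hJ.isLowerJ_strictLower (a : M)).spanIdeal K
  have hsA : s * A ∈ I := IsLowerJ.mem_spanIdeal _ |>.mpr (mul_of_mem_span_not_leJ hs).1
  have hAs : A * s ∈ I := IsLowerJ.mem_spanIdeal _ |>.mpr (mul_of_mem_span_not_leJ hs).2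
  have h : compression f a - A = s * A * s - s * A - A * s := by
    simp only [compression, s, A]
    noncomm_ring
  rw [← (hJ.isLowerJ_strictLower (a : M)).mem_spanIdeal, h]
  exact sub_mem (sub_mem (I.mul_mem_right _ _ hsA) hsA) hAs

theorem update {a : E(M)} {fa : K[M]} (hf : IsLiftingOn K hJ S f) (ha : a ∉ S)
    (hidem : IsIdempotentElem fa) (hleft : ∀ e, f e * fa = 0) (hright : ∀ e, fa * f e = 0)
    (htri : fa - of K M (a : M) ∈ span K (of K M '' {x | leJ x a ∧ x ≠ a}))
    (hχ : ∀ e' : E(M), hJ.character K e' fa = if e' = a then 1 else 0) :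
    IsLiftingOn K hJ (insert a S) (Function.update f a fa) := by
  refine ⟨⟨fun i => ?_, fun i j hij => ?_⟩, fun e he => ?_, fun e he => ?_, fun e he => ?_⟩
  · rcases eq_or_ne i a with rfl | hi
    · simpa using hidem
    · simpa [hi] using hf.orthogonalIdempotents.idem i
  · simp only [Function.update_apply]
    split_ifs with hi hj hj
    · exact absurd (hi.trans hj.symm) hij
    · exact hright j
    · exact hleft i
    · exact hf.orthogonalIdempotents.ortho hij
  · rw [mem_insert, not_or] at he
    rw [Function.update_of_ne he.1, hf.eq_zero e he.2]
  · rcases eq_or_ne e a with rfl | hea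
    · simpa using htri
    · simpa [hea] using hf.sub_mem_span e ((mem_insert.mp he).resolve_left hea)
  · rcases eq_or_ne e a with rfl | hea
    · simpa using hχ
    · simpa [hea] using hf.character_eq e ((mem_insert.mp he).resolve_left hea)

theorem exists_insert [Fintype M] (hf : IsLiftingOn K hJ S f) {a : E(M)}
    (htop : ∀ e ∈ S, ¬ leJ (a : M) e)
    (hbelow : ∀ e : E(M), leJ (e : M) a → e ≠ a → e ∈ S) :
    ∃ fa, IsLiftingOn K hJ (insert a S) (Function.update f a fa) := by
  have ha : a ∉ S := fun h => htop a h (leJ_refl _)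
  set t := compression f a
  have hχt := hf.character_compression ha hbelow
  have hχ_sub_sq (e' : E(M)) : hJ.character K e' (t - t ^ 2) = 0 := by
    rw [map_sub, map_pow, hχt]
    split_ifs <;> simp
  obtain ⟨fa, hidem, hleft, hright, hideal⟩ := exists_isIdempotentElem_of_isNilpotent_sub_sq
    (hJ.isNilpotent_of_forall_character_eq_zero fun e' he' => hχ_sub_sq ⟨e', he'⟩)
  have hχfa (e' : E(M)) : hJ.character K e' fa = if e' = a then 1 else 0 := by
    have h := hideal (TwoSidedIdeal.ker (hJ.character K e'))
      ((TwoSidedIdeal.mem_ker _).mpr (hχ_sub_sq e'))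
    rw [TwoSidedIdeal.mem_ker, map_sub, sub_eq_zero] at h
    rw [h, hχt]
  have htri : fa - of K M (a : M) ∈ span K (of K M '' {x | leJ x a ∧ x ≠ a}) := by
    set I := (hJ.isLowerJ_strictLower (a : M)).spanIdeal K
    have hta : t - of K M (a : M) ∈ I := IsLowerJ.mem_spanIdeal _ |>.mpr
      (hf.compression_sub_mem_span htop)
    have h := add_mem (hideal I (I.sub_sq_mem_of_sub_mem (a.2.map (of K M)) hta)) hta
    rwa [sub_add_sub_cancel, IsLowerJ.mem_spanIdeal] at h
  exact ⟨fa, hf.update ha hidem (fun e => hleft _ (hf.orthogonalIdempotents.mul_compression e a))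
    (fun e => hright _ (hf.orthogonalIdempotents.compression_mul e a)) htri hχfa⟩

end IsLiftingOn

theorem JTrivial.exists_isLiftingOn [Fintype M] (hJ : JTrivial M) (S : Finset E(M)) :
    IsLowerJ Subtype.val (S : Set E(M)) → ∃ f, IsLiftingOn K hJ S f := by
  induction S using Finset.induction_on_max_value (fun e : E(M) => jHeight (e : M)) with
  | empty =>
    exact fun _ => ⟨0, ⟨fun _ => IsIdempotentElem.zero, fun _ _ _ => mul_zero 0⟩,
      by simp, by simp, by simp⟩
  | insert a S ha hmax ih =>
    intro hS
    have htop : ∀ e ∈ S, ¬ leJ (a : M) e := fun e he => hJ.not_leJ_of_jHeight_le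
      (Subtype.val_injective.ne (ne_of_mem_of_not_mem he ha).symm) (hmax e he)
    rw [coe_insert] at hS
    obtain ⟨f, hf⟩ := ih (hS.of_insert htop)
    obtain ⟨fa, hfa⟩ :=
      hf.exists_insert htop fun e hea hne => (hS hea (Set.mem_insert a S)).resolve_left hne
    exact ⟨_, hfa⟩

theorem IsLiftingOn.sum_eq_one [Fintype M] {hJ : JTrivial M} {f : E(M) → K[M]}
    (hf : IsLiftingOn K hJ univ f) : ∑ e, f e = 1 := by
  have hidem : IsIdempotentElem (1 - ∑ e, f e) :=
    hf.orthogonalIdempotents.isIdempotentElem_sum.one_sub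
  have hnil : IsNilpotent (1 - ∑ e, f e) :=
    hJ.isNilpotent_of_forall_character_eq_zero fun e he => by
      rw [map_sub, map_one, hf.character_sum ⟨e, he⟩, if_pos (mem_univ _), sub_self]
  exact (sub_eq_zero.mp (hidem.eq_zero_of_isNilpotent hnil)).symm

end Construction

end

theorem lifting_of_idempotents_general (K : Type*) [Field K] {M : Type*} [Monoid M] [Fintype M]
    (hJ : JTrivial M)
    (g : {e : M // IsIdempotentElem e} → MonoidAlgebra K M)
    (hg : ∀ e : {e : M // IsIdempotentElem e},
      (MonoidAlgebra.of K M (e : M) : MonoidAlgebra K M)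
        = ∑ e' ∈ Finset.univ.filter
            (fun e' : {e : M // IsIdempotentElem e} => leJ (e' : M) (e : M)), g e') :
    ∃ f : {e : M // IsIdempotentElem e} → MonoidAlgebra K M,
      (∑ e : {e : M // IsIdempotentElem e}, f e) = 1 ∧
      (∀ e e' : {e : M // IsIdempotentElem e},
        f e * f e' = if e = e' then f e else 0) ∧
      (∀ e : {e : M // IsIdempotentElem e},
        f e - g e ∈ Ideal.jacobson (⊥ : Ideal (MonoidAlgebra K M))) ∧
      (∀ e : {e : M // IsIdempotentElem e},
        f e - MonoidAlgebra.of K M (e : M) ∈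
          Submodule.span K
            ((fun z : M => (MonoidAlgebra.of K M z : MonoidAlgebra K M)) ''
              {x : M | leJ x (e : M) ∧ x ≠ (e : M)})) := by
  obtain ⟨f, hf⟩ := hJ.exists_isLiftingOn (K := K) univ fun _ _ _ _ => mem_univ _
  refine ⟨f, hf.sum_eq_one, hf.orthogonalIdempotents.mul_eq, fun e => ?_,
    fun e => hf.sub_mem_span e (mem_univ e)⟩
  refine hJ.mem_jacobson_of_forall_character_eq_zero fun e' he' => ?_
  rw [map_sub, hf.character_eq e (mem_univ e) ⟨e', he'⟩,
    hJ.character_eq_of_eq_sum g hg e ⟨e', he'⟩, sub_self]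

/-- Lifting of idempotents: let `K` be a field, `M` a finite `J`-trivial monoid, and let
`(g_e)_{e ∈ E(M)}` be the unique family in the `K`-span of the idempotents satisfying
`e = Σ_{e' ≤_J e} g_{e'}`.  Then there is a family `(f_e)_{e ∈ E(M)}` in `K[M]` which is a
decomposition of the identity into orthogonal idempotents, is compatible with the semi-simple
quotient (`f_e ≡ g_e` mod the radical), and is uni-triangular with respect to `≤_J`. -/
theorem lifting_of_idempotents (K : Type*) [Field K] {M : Type*} [Monoid M] [Fintype M]
    (hJ : JTrivial M)
    (g : {e : M // IsIdempotentElem e} → MonoidAlgebra K M)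
    (hgspan : ∀ e : {e : M // IsIdempotentElem e},
      g e ∈ Submodule.span K
        ((fun z : M => (MonoidAlgebra.of K M z : MonoidAlgebra K M)) ''
          {z : M | IsIdempotentElem z}))
    (hg : ∀ e : {e : M // IsIdempotentElem e},
      (MonoidAlgebra.of K M (e : M) : MonoidAlgebra K M)
        = ∑ e' ∈ Finset.univ.filter
            (fun e' : {e : M // IsIdempotentElem e} => leJ (e' : M) (e : M)), g e') :
    ∃ f : {e : M // IsIdempotentElem e} → MonoidAlgebra K M,
      (∑ e : {e : M // IsIdempotentElem e}, f e) = 1 ∧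
      (∀ e e' : {e : M // IsIdempotentElem e},
        f e * f e' = if e = e' then f e else 0) ∧
      (∀ e : {e : M // IsIdempotentElem e},
        f e - g e ∈ Ideal.jacobson (⊥ : Ideal (MonoidAlgebra K M))) ∧
      (∀ e : {e : M // IsIdempotentElem e},
        f e - MonoidAlgebra.of K M (e : M) ∈
          Submodule.span K
            ((fun z : M => (MonoidAlgebra.of K M z : MonoidAlgebra K M)) ''
              {x : M | leJ x (e : M) ∧ x ≠ (e : M)})) :=
  lifting_of_idempotents_general K hJ g hg
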